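/- If A ∈ ℂ^{n×n} is a Nekrasov matrix and P is any permutation matrix, then ‖A⁻¹‖_∞ = ‖(PAPᵀ)⁻¹‖_∞; hence the Nekrasov-based bounds applied to PAPᵀ (when PAPᵀ is Nekrasov) also bound ‖A⁻¹‖_∞. In particular, if PAPᵀ is Nekrasov for some permutation P (A is a Gudkov matrix), then A is nonsingular and ‖A⁻¹‖_∞ ≤ (max_i z_i(PAPᵀ)) / (min_i (|(PAPᵀ)_ii| − h_i(PAPᵀ))). -/

import Mathlib

open Matrix

attribute [local instance] Matrix.linftyOpNormedAddCommGroup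

/-- Deleted i-th row sum r_i(A). -/
noncomputable def rowSum {n : ℕ} (A : Matrix (Fin n) (Fin n) ℂ) (i : Fin n) : ℝ :=
  ∑ j ∈ Finset.univ.erase i, ‖A i j‖

/-- Recursive Nekrasov quantities h_i(A). -/
noncomputable def nekH {n : ℕ} (A : Matrix (Fin n) (Fin n) ℂ) : Fin n → ℝ :=
  fun i =>
    (∑ j : {j : Fin n // j < i}, ‖A i j.1‖ * nekH A j.1 / ‖A j.1 j.1‖) +
      ∑ j ∈ Finset.univ.filter (fun j => i < j), ‖A i j‖
  termination_by i => (i : ℕ)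
  decreasing_by exact j.2

/-- Recursive quantities z_i(A). -/
noncomputable def nekZ {n : ℕ} (A : Matrix (Fin n) (Fin n) ℂ) : Fin n → ℝ :=
  fun i => (∑ j : {j : Fin n // j < i}, ‖A i j.1‖ / ‖A j.1 j.1‖ * nekZ A j.1) + 1
  termination_by i => (i : ℕ)
  decreasing_by exact j.2

/-- |D| : entrywise absolute value of the diagonal part. -/
noncomputable def absD {n : ℕ} (A : Matrix (Fin n) (Fin n) ℂ) : Matrix (Fin n) (Fin n) ℝ :=
  Matrix.of fun i j => if i = j then ‖A i j‖ else 0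

/-- |L| : entrywise absolute value of the strictly lower triangular part. -/
noncomputable def absL {n : ℕ} (A : Matrix (Fin n) (Fin n) ℂ) : Matrix (Fin n) (Fin n) ℝ :=
  Matrix.of fun i j => if j < i then ‖A i j‖ else 0

/-- |U| : entrywise absolute value of the strictly upper triangular part. -/
noncomputable def absU {n : ℕ} (A : Matrix (Fin n) (Fin n) ℂ) : Matrix (Fin n) (Fin n) ℝ :=
  Matrix.of fun i j => if i < j then ‖A i j‖ else 0

/-- Comparison matrix ⟨A⟩. -/
noncomputable def cmpM {n : ℕ} (A : Matrix (Fin n) (Fin n) ℂ) : Matrix (Fin n) (Fin n) ℝ :=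
  Matrix.of fun i j => if i = j then ‖A i j‖ else -‖A i j‖

section NekAux

variable {n : ℕ}

lemma nekH_eq (A : Matrix (Fin n) (Fin n) ℂ) (i : Fin n) :
    nekH A i = (∑ j ∈ Finset.univ.filter (fun j => j < i), ‖A i j‖ * nekH A j / ‖A j j‖) +
      ∑ j ∈ Finset.univ.filter (fun j => i < j), ‖A i j‖ := by
  rw [nekH]
  congr 1
  exact (Finset.sum_subtype (Finset.univ.filter (fun j : Fin n => j < i))
    (fun x => by simp) (fun j => ‖A i j‖ * nekH A j / ‖A j j‖)).symm

lemma nekZ_eq (A : Matrix (Fin n) (Fin n) ℂ) (i : Fin n) :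
    nekZ A i = (∑ j ∈ Finset.univ.filter (fun j => j < i), ‖A i j‖ / ‖A j j‖ * nekZ A j) + 1 := by
  rw [nekZ]
  congr 1
  exact (Finset.sum_subtype (Finset.univ.filter (fun j : Fin n => j < i))
    (fun x => by simp) (fun j => ‖A i j‖ / ‖A j j‖ * nekZ A j)).symm

lemma nekH_nonneg (A : Matrix (Fin n) (Fin n) ℂ) : ∀ i, 0 ≤ nekH A i := by
  intro i
  induction i using WellFoundedLT.induction with
  | _ i ih =>
    rw [nekH_eq]
    refine add_nonneg (Finset.sum_nonneg fun j hj => ?_)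
      (Finset.sum_nonneg fun j _ => norm_nonneg _)
    exact div_nonneg (mul_nonneg (norm_nonneg _) (ih j (Finset.mem_filter.1 hj).2))
      (norm_nonneg _)

lemma one_le_nekZ (A : Matrix (Fin n) (Fin n) ℂ) : ∀ i, 1 ≤ nekZ A i := by
  intro i
  induction i using WellFoundedLT.induction with
  | _ i ih =>
    rw [nekZ_eq]
    refine le_add_of_nonneg_left (Finset.sum_nonneg fun j hj => ?_)
    exact mul_nonneg (div_nonneg (norm_nonneg _) (norm_nonneg _))
      (le_trans zero_le_one (ih j (Finset.mem_filter.1 hj).2))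

lemma erase_split (g : Fin n → ℝ) (i : Fin n) :
    ∑ j ∈ Finset.univ.erase i, g j =
      (∑ j ∈ Finset.univ.filter (fun j => j < i), g j) +
      ∑ j ∈ Finset.univ.filter (fun j => i < j), g j := by
  rw [← Finset.sum_filter_add_sum_filter_not (Finset.univ.erase i) (fun j => j < i)]
  congr 1
  · refine Finset.sum_congr ?_ (fun _ _ => rfl)
    ext j
    simp only [Finset.mem_filter, Finset.mem_erase, Finset.mem_univ, true_and, and_true,
      Fin.lt_def, Fin.ext_iff, ne_eq]
    omega
  · refine Finset.sum_congr ?_ (fun _ _ => rfl)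
    ext j
    simp only [Finset.mem_filter, Finset.mem_erase, Finset.mem_univ, true_and, and_true,
      Fin.lt_def, Fin.ext_iff, ne_eq, not_lt]
    omega

lemma nek_key (A : Matrix (Fin n) (Fin n) ℂ) (hd : ∀ i, nekH A i < ‖A i i‖)
    (x c : Fin n → ℂ) (hxc : A.mulVec x = c) (γ M : ℝ)
    (hγ : ∀ j, ‖c j‖ ≤ γ) (hM : ∀ j, ‖x j‖ ≤ M) :
    ∀ i, ‖A i i‖ * ‖x i‖ ≤ γ * nekZ A i + nekH A i * M := by
  intro i
  induction i using WellFoundedLT.induction with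
  | _ i ih =>
    have hrow : A i i * x i = c i - ∑ j ∈ Finset.univ.erase i, A i j * x j := by
      have h0 := congrFun hxc i
      rw [Matrix.mulVec, dotProduct] at h0
      rw [← Finset.sum_erase_add Finset.univ _ (Finset.mem_univ i)] at h0
      exact eq_sub_of_add_eq' h0
    have h1 : ‖A i i‖ * ‖x i‖ ≤ γ + ∑ j ∈ Finset.univ.erase i, ‖A i j‖ * ‖x j‖ := by
      calc ‖A i i‖ * ‖x i‖ = ‖A i i * x i‖ := (norm_mul _ _).symm
        _ ≤ ‖c i‖ + ‖∑ j ∈ Finset.univ.erase i, A i j * x j‖ := by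
            rw [hrow]; exact norm_sub_le _ _
        _ ≤ γ + ∑ j ∈ Finset.univ.erase i, ‖A i j‖ * ‖x j‖ := by
            refine add_le_add (hγ i) ((norm_sum_le _ _).trans (le_of_eq ?_))
            exact Finset.sum_congr rfl fun j _ => norm_mul _ _
    rw [erase_split (fun j => ‖A i j‖ * ‖x j‖) i] at h1
    have hL : ∑ j ∈ Finset.univ.filter (fun j => j < i), ‖A i j‖ * ‖x j‖
        ≤ γ * (∑ j ∈ Finset.univ.filter (fun j => j < i), ‖A i j‖ / ‖A j j‖ * nekZ A j)
          + (∑ j ∈ Finset.univ.filter (fun j => j < i), ‖A i j‖ * nekH A j / ‖A j j‖) * M := by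
      rw [Finset.mul_sum, Finset.sum_mul, ← Finset.sum_add_distrib]
      refine Finset.sum_le_sum fun j hj => ?_
      have hji : j < i := (Finset.mem_filter.1 hj).2
      have hdj : 0 < ‖A j j‖ := lt_of_le_of_lt (nekH_nonneg A j) (hd j)
      have h2 := ih j hji
      have h3 : ‖x j‖ ≤ (γ * nekZ A j + nekH A j * M) / ‖A j j‖ := by
        rw [le_div_iff₀ hdj]; linarith
      calc ‖A i j‖ * ‖x j‖ ≤ ‖A i j‖ * ((γ * nekZ A j + nekH A j * M) / ‖A j j‖) :=
          mul_le_mul_of_nonneg_left h3 (norm_nonneg _)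
        _ = γ * (‖A i j‖ / ‖A j j‖ * nekZ A j) + ‖A i j‖ * nekH A j / ‖A j j‖ * M := by
          ring
    have hU : ∑ j ∈ Finset.univ.filter (fun j => i < j), ‖A i j‖ * ‖x j‖
        ≤ (∑ j ∈ Finset.univ.filter (fun j => i < j), ‖A i j‖) * M := by
      rw [Finset.sum_mul]
      exact Finset.sum_le_sum fun j _ => mul_le_mul_of_nonneg_left (hM j) (norm_nonneg _)
    rw [nekZ_eq A i, nekH_eq A i]
    have hexp : γ * ((∑ j ∈ Finset.univ.filter (fun j => j < i), ‖A i j‖ / ‖A j j‖ * nekZ A j) + 1)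
        + ((∑ j ∈ Finset.univ.filter (fun j => j < i), ‖A i j‖ * nekH A j / ‖A j j‖)
            + ∑ j ∈ Finset.univ.filter (fun j => i < j), ‖A i j‖) * M
        = (γ * (∑ j ∈ Finset.univ.filter (fun j => j < i), ‖A i j‖ / ‖A j j‖ * nekZ A j)
            + (∑ j ∈ Finset.univ.filter (fun j => j < i), ‖A i j‖ * nekH A j / ‖A j j‖) * M)
          + ((∑ j ∈ Finset.univ.filter (fun j => i < j), ‖A i j‖) * M) + γ := by ring
    rw [hexp]
    linarith

end NekAux

section NekMain

variable {n : ℕ}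

lemma nek_isUnit (A : Matrix (Fin n) (Fin n) ℂ) [NeZero n]
    (hd : ∀ i, nekH A i < ‖A i i‖) : IsUnit A := by
  rw [← Matrix.mulVec_injective_iff_isUnit]
  intro x y hxy
  have hsub : A.mulVec (x - y) = 0 := by
    rw [Matrix.mulVec_sub, hxy, sub_self]
  obtain ⟨i0, hmax⟩ := Finite.exists_max (fun j => ‖(x - y) j‖)
  have hk := nek_key A hd (x - y) 0 hsub 0 ‖(x - y) i0‖ (fun j => by simp) hmax i0
  have hpos : 0 < ‖A i0 i0‖ - nekH A i0 := sub_pos.2 (hd i0)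
  have hm0 : ‖(x - y) i0‖ ≤ 0 := by nlinarith [norm_nonneg ((x - y) i0)]
  have hz : x - y = 0 := funext fun j => norm_le_zero_iff.1 (le_trans (hmax j) hm0)
  exact sub_eq_zero.1 hz

lemma nek_norm_inv_le (A : Matrix (Fin n) (Fin n) ℂ) [NeZero n]
    (hd : ∀ i, nekH A i < ‖A i i‖) :
    ‖A⁻¹‖ ≤ (⨆ i, nekZ A i) / (⨅ i, (‖A i i‖ - nekH A i)) := by
  have hUnit : IsUnit A := nek_isUnit A hd
  have hdet : IsUnit A.det := (Matrix.isUnit_iff_isUnit_det A).1 hUnit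
  have hBinv : A * A⁻¹ = 1 := Matrix.mul_nonsing_inv A hdet
  -- positivity of the infimum
  set f : Fin n → ℝ := fun i => ‖A i i‖ - nekH A i with hf
  have hfpos : ∀ i, 0 < f i := fun i => sub_pos.2 (hd i)
  obtain ⟨imin, hmin⟩ := Finite.exists_min f
  have hinf_pos : 0 < ⨅ i, f i := lt_of_lt_of_le (hfpos imin) (le_ciInf hmin)
  have hinf_le : ∀ i, (⨅ j, f j) ≤ f i := fun i =>
    ciInf_le (Set.Finite.bddBelow (Set.finite_range f)) i
  have hsup_le : ∀ i, nekZ A i ≤ ⨆ j, nekZ A j := fun i =>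
    le_ciSup (Set.Finite.bddAbove (Set.finite_range _)) i
  have hsup_nonneg : (0 : ℝ) ≤ ⨆ j, nekZ A j :=
    le_trans (le_trans zero_le_one (one_le_nekZ A (Classical.arbitrary _)))
      (hsup_le (Classical.arbitrary _))
  -- row sums of A⁻¹ are bounded by K
  have hrowsum : ∀ i, ∑ j, ‖A⁻¹ i j‖ ≤ (⨆ i, nekZ A i) / (⨅ i, f i) := by
    intro i
    set c : Fin n → ℂ := fun j => star (A⁻¹ i j) / (‖A⁻¹ i j‖ : ℂ) with hc
    have hc1 : ∀ j, ‖c j‖ ≤ 1 := by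
      intro j
      by_cases h : A⁻¹ i j = 0
      · simp [hc, h]
      · have hpos : (0:ℝ) < ‖A⁻¹ i j‖ := norm_pos_iff.2 h
        rw [hc]
        simp only [norm_div, norm_star, Complex.norm_real, Real.norm_eq_abs, abs_norm]
        rw [div_self (ne_of_gt hpos)]
    have hprod : ∀ j, A⁻¹ i j * c j = ((‖A⁻¹ i j‖ : ℝ) : ℂ) := by
      intro j
      by_cases h : A⁻¹ i j = 0
      · simp [hc, h]
      · have hpos : (0:ℝ) < ‖A⁻¹ i j‖ := norm_pos_iff.2 h
        rw [hc]
        rw [mul_div_assoc', Complex.star_def, RCLike.mul_conj]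
        rw [pow_two]
        have hne : (‖A⁻¹ i j‖ : ℂ) ≠ 0 := Complex.ofReal_ne_zero.2 (ne_of_gt hpos)
        field_simp
        rfl
    set x : Fin n → ℂ := A⁻¹.mulVec c with hx
    have hxc : A.mulVec x = c := by
      rw [hx, Matrix.mulVec_mulVec, hBinv, Matrix.one_mulVec]
    have hxi : x i = ((∑ j, ‖A⁻¹ i j‖ : ℝ) : ℂ) := by
      rw [hx, Matrix.mulVec, dotProduct]
      push_cast
      exact Finset.sum_congr rfl fun j _ => hprod j
    obtain ⟨i0, hmax⟩ := Finite.exists_max (fun j => ‖x j‖)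
    have hk := nek_key A hd x c hxc 1 ‖x i0‖ hc1 hmax i0
    have hb1 : ‖x i0‖ * f i0 ≤ nekZ A i0 := by
      have : ‖x i0‖ * f i0 = ‖A i0 i0‖ * ‖x i0‖ - nekH A i0 * ‖x i0‖ := by
        rw [hf]; ring
      rw [this]; linarith
    have hb2 : ‖x i0‖ ≤ nekZ A i0 / f i0 := (le_div_iff₀ (hfpos i0)).2 hb1
    have hb3 : nekZ A i0 / f i0 ≤ (⨆ i, nekZ A i) / (⨅ i, f i) :=
      div_le_div₀ hsup_nonneg (hsup_le i0) hinf_pos (hinf_le i0)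
    have : ∑ j, ‖A⁻¹ i j‖ = ‖x i‖ := by
      rw [hxi, Complex.norm_real, Real.norm_eq_abs,
        abs_of_nonneg (Finset.sum_nonneg fun j _ => norm_nonneg _)]
    rw [this]
    exact le_trans (le_trans (hmax i) hb2) hb3
  -- conclude via the linfty operator norm formula
  rw [Matrix.linfty_opNorm_def]
  obtain ⟨i1, -, hi1⟩ := Finset.exists_mem_eq_sup Finset.univ
    (Finset.univ_nonempty) (fun i : Fin n => ∑ j, ‖A⁻¹ i j‖₊)
  rw [hi1]
  calc ((∑ j, ‖A⁻¹ i1 j‖₊ : NNReal) : ℝ) = ∑ j, ‖A⁻¹ i1 j‖ := by push_cast; rfl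
    _ ≤ _ := hrowsum i1

end NekMain

section PermPart

variable {n : ℕ}

lemma perm_conj_eq (A : Matrix (Fin n) (Fin n) ℂ) (σ : Equiv.Perm (Fin n)) :
    σ.permMatrix ℂ * A * (σ.permMatrix ℂ)ᵀ = A.submatrix σ σ := by
  have h1 : (σ.permMatrix ℂ)ᵀ = (σ.symm.toPEquiv.toMatrix : Matrix (Fin n) (Fin n) ℂ) := by
    rw [Equiv.toPEquiv_symm, PEquiv.toMatrix_symm]
  rw [h1, PEquiv.toMatrix_toPEquiv_mul, PEquiv.mul_toMatrix_toPEquiv]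
  simp [Matrix.submatrix_submatrix]

lemma norm_submatrix_perm (M : Matrix (Fin n) (Fin n) ℂ) (σ : Equiv.Perm (Fin n)) :
    ‖M.submatrix σ σ‖ = ‖M‖ := by
  rw [Matrix.linfty_opNorm_def, Matrix.linfty_opNorm_def]
  congr 1
  have hrow : ∀ i, (∑ j, ‖M.submatrix σ σ i j‖₊) = ∑ j, ‖M (σ i) j‖₊ := fun i =>
    Fintype.sum_equiv σ _ _ (fun j => rfl)
  refine le_antisymm (Finset.sup_le fun i _ => ?_) (Finset.sup_le fun i _ => ?_)
  · rw [hrow i]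
    exact Finset.le_sup (f := fun i => ∑ j, ‖M i j‖₊) (Finset.mem_univ (σ i))
  · have := hrow (σ.symm i)
    rw [Equiv.apply_symm_apply] at this
    rw [← this]
    exact Finset.le_sup (f := fun i => ∑ j, ‖M.submatrix σ σ i j‖₊)
      (Finset.mem_univ (σ.symm i))

end PermPart

/-- Gudkov matrices: if PAPᵀ is Nekrasov for a permutation matrix P, then
    ‖A⁻¹‖_∞ = ‖(PAPᵀ)⁻¹‖_∞, A is nonsingular, and the second Nekrasov bound
    applied to PAPᵀ bounds ‖A⁻¹‖_∞. -/
theorem stmt18 {n : ℕ} (hn : 2 ≤ n) (A : Matrix (Fin n) (Fin n) ℂ)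
    (σ : Equiv.Perm (Fin n))
    (hNek : ∀ i, nekH (σ.permMatrix ℂ * A * (σ.permMatrix ℂ)ᵀ) i
        < ‖(σ.permMatrix ℂ * A * (σ.permMatrix ℂ)ᵀ) i i‖) :
    ‖A⁻¹‖ = ‖(σ.permMatrix ℂ * A * (σ.permMatrix ℂ)ᵀ)⁻¹‖ ∧
    IsUnit A ∧
    ‖A⁻¹‖ ≤ (⨆ i, nekZ (σ.permMatrix ℂ * A * (σ.permMatrix ℂ)ᵀ) i) /
      (⨅ i, (‖(σ.permMatrix ℂ * A * (σ.permMatrix ℂ)ᵀ) i i‖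
        - nekH (σ.permMatrix ℂ * A * (σ.permMatrix ℂ)ᵀ) i)) := by
  have : NeZero n := ⟨by omega⟩
  have hsub := perm_conj_eq A σ
  have hBinv : (σ.permMatrix ℂ * A * (σ.permMatrix ℂ)ᵀ)⁻¹ = A⁻¹.submatrix σ σ := by
    rw [hsub]
    exact Matrix.inv_submatrix_equiv A σ σ
  have hnorm : ‖A⁻¹‖ = ‖(σ.permMatrix ℂ * A * (σ.permMatrix ℂ)ᵀ)⁻¹‖ := by
    rw [hBinv, norm_submatrix_perm]
  refine ⟨hnorm, ?_, ?_⟩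
  · have hB : IsUnit (σ.permMatrix ℂ * A * (σ.permMatrix ℂ)ᵀ) :=
      nek_isUnit _ hNek
    rw [Matrix.isUnit_iff_isUnit_det] at hB ⊢
    rwa [hsub, Matrix.det_submatrix_equiv_self] at hB
  · rw [hnorm]
    exact nek_norm_inv_le _ hNek
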